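/- Let F be a real polynomial of degree less than N and r ≥ 0 an integer, and let α*_r F denote the remainder on dividing ∑_{k=0}^{N−1} α_{r,k}·F_k·X^{k+r} by X^N − 1, where F_k is the coefficient of X^k in F. Then every coefficient of α*_r F has absolute value at most 2^{−r(b−2)} · max_{0≤k<N} |F_k|. -/

import Mathlib

open Polynomial

/-- Generalized binomial coefficient `C(x, r) = x (x-1) ⋯ (x-r+1) / r!`. -/
noncomputable def gbc (x : ℝ) (r : ℕ) : ℝ :=
  (∏ j ∈ Finset.range r, (x - j)) / (r.factorial : ℝ)

/-- `α_{0,k} = 1` and `α_{r,k} = (k/(rN)) C((k+r)/N - 1, r-1) (-2^(-b))^r` for `r ≥ 1`. -/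
noncomputable def alphaC (b N r k : ℕ) : ℝ :=
  if r = 0 then 1
  else ((k : ℝ) / (r * N)) * gbc (((k : ℝ) + r) / N - 1) (r - 1) * (-(2:ℝ) ^ (-(b:ℤ))) ^ r

/-- `α*_r F`: the remainder of `∑_{k<N} α_{r,k} F_k X^(k+r)` modulo `X^N - 1`. -/
noncomputable def astar (b N r : ℕ) (F : Polynomial ℝ) : Polynomial ℝ :=
  (∑ k ∈ Finset.range N, C (alphaC b N r k * F.coeff k) * X ^ (k + r)) %ₘ (X ^ N - 1)

/-!
Reducing `X ^ (k + r)` modulo `X ^ N - 1` gives `X ^ ((k + r) % N)`, and `k ↦ (k + r) % N` is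
injective on `[0, N)`, so each coefficient of `α*_r F` is a single product `α_{r,k} F_k` or `0`.
It remains to bound `|α_{r,k}| ≤ 2^{-rb}`: for `k < N` the factor `k / (rN)` is at most `1`, and
the argument `y = (k + r)/N - 1` of the binomial coefficient lies in `[-1, r - 1]`, where
`|C(y, m)| ≤ 1` because `|y (y - 1) ⋯ (y - m + 1)| ≤ m!` for `-1 ≤ y ≤ m`.
-/

lemma prod_abs_sub_natCast_le_factorial (m : ℕ) {y : ℝ} (h₁ : -1 ≤ y) (h₂ : y ≤ m) :
    ∏ j ∈ Finset.range m, |y - j| ≤ m.factorial := by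
  induction m generalizing y with
  | zero => simp
  | succ m ih =>
    push_cast at h₂
    -- peel off the factor `y` (shifting `y` to `y - 1`) if `y ≥ 0`, and `y - m` if `y < 0`
    rw [Nat.factorial_succ, Nat.cast_mul, Nat.cast_succ]
    rcases le_or_gt 0 y with hy | hy
    · rw [Finset.prod_range_succ', mul_comm, Nat.cast_zero, sub_zero, abs_of_nonneg hy]
      simp only [Nat.cast_succ, sub_add_eq_sub_sub_swap]
      gcongr
      exact ih (by linarith) (by linarith)
    · rw [Finset.prod_range_succ, mul_comm, abs_of_neg (by linarith)]
      gcongr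
      · linarith
      · exact ih h₁ (by linarith [m.cast_nonneg (α := ℝ)])

lemma abs_gbc_le_one (m : ℕ) {y : ℝ} (h₁ : -1 ≤ y) (h₂ : y ≤ m) : |gbc y m| ≤ 1 := by
  rw [gbc, abs_div, Finset.abs_prod, Nat.abs_cast, div_le_one (by positivity)]
  exact prod_abs_sub_natCast_le_factorial m h₁ h₂

lemma abs_sum_filter_le_of_injOn {ι κ α : Type*} [DecidableEq κ] [AddCommGroup α] [LinearOrder α]
    [IsOrderedAddMonoid α] {s : Finset ι} {g : ι → κ} (hg : Set.InjOn g s) (j : κ) {f : ι → α}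
    {M : α} (hM : 0 ≤ M) (hf : ∀ k ∈ s, |f k| ≤ M) :
    |∑ k ∈ s with g k = j, f k| ≤ M := by
  have hcard : ({k ∈ s | g k = j} : Finset ι).card ≤ 1 := by
    refine Finset.card_le_one.mpr fun a ha a' ha' => ?_
    simp only [Finset.mem_filter] at ha ha'
    exact hg ha.1 ha'.1 (ha.2.trans ha'.2.symm)
  calc |∑ k ∈ s with g k = j, f k| ≤ ∑ k ∈ s with g k = j, |f k| := Finset.abs_sum_le_sum_abs _ _
    _ ≤ ({k ∈ s | g k = j} : Finset ι).card • M :=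
        Finset.sum_le_card_nsmul _ _ _ fun k hk => hf k (Finset.mem_filter.mp hk).1
    _ ≤ 1 • M := nsmul_le_nsmul_left hM hcard
    _ = M := one_nsmul M

lemma abs_alphaC_le (b : ℕ) {N : ℕ} (hN : 0 < N) (r : ℕ) {k : ℕ} (hk : k < N) :
    |alphaC b N r k| ≤ ((2 : ℝ) ^ (-(b : ℤ))) ^ r := by
  rcases Nat.eq_zero_or_pos r with rfl | hr
  · simp [alphaC]
  have hN' : (0 : ℝ) < N := by exact_mod_cast hN
  have hr' : (1 : ℝ) ≤ r := by exact_mod_cast hr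
  have hk' : (k : ℝ) + 1 ≤ N := by exact_mod_cast hk
  have hfrac : |(k : ℝ) / (r * N)| ≤ 1 := by
    rw [abs_of_nonneg (by positivity), div_le_one (by positivity)]
    nlinarith
  have hgbc : |gbc (((k : ℝ) + r) / N - 1) (r - 1)| ≤ 1 := by
    apply abs_gbc_le_one
    · linarith [show (0 : ℝ) ≤ ((k : ℝ) + r) / N by positivity]
    · rw [Nat.cast_sub hr, Nat.cast_one, sub_le_sub_iff_right, div_le_iff₀ hN']
      nlinarith
  rw [alphaC, if_neg hr.ne', abs_mul, abs_mul, abs_pow, abs_neg,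
    abs_of_pos (zpow_pos two_pos _ : (0 : ℝ) < 2 ^ (-(b : ℤ)))]
  calc |(k : ℝ) / (r * N)| * |gbc (((k : ℝ) + r) / N - 1) (r - 1)| * ((2 : ℝ) ^ (-(b : ℤ))) ^ r
      ≤ 1 * 1 * ((2 : ℝ) ^ (-(b : ℤ))) ^ r := by gcongr
    _ = ((2 : ℝ) ^ (-(b : ℤ))) ^ r := by ring

lemma X_pow_modByMonic_X_pow_sub_one {R : Type*} [CommRing R] [Nontrivial R] {N : ℕ} (hN : 0 < N)
    (m : ℕ) : (X ^ m : R[X]) %ₘ (X ^ N - 1) = X ^ (m % N) := by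
  have hmonic : (X ^ N - 1 : R[X]).Monic := by simpa using monic_X_pow_sub_C (1 : R) hN.ne'
  have hdvd : (X ^ N - 1 : R[X]) ∣ X ^ m - X ^ (m % N) := by
    have : (X ^ m - X ^ (m % N) : R[X]) = (X ^ (N * (m / N)) - 1) * X ^ (m % N) := by
      rw [sub_mul, one_mul, ← pow_add, Nat.div_add_mod]
    exact this ▸ (pow_one_sub_dvd_pow_mul_sub_one X N (m / N)).mul_right _
  have hdeg : (X ^ N - 1 : R[X]).degree = N := by simpa using degree_X_pow_sub_C hN (1 : R)
  rw [modByMonic_eq_of_dvd_sub hmonic hdvd, modByMonic_eq_self_iff hmonic, degree_X_pow, hdeg]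
  exact_mod_cast Nat.mod_lt m hN

lemma sum_C_mul_X_pow_modByMonic_X_pow_sub_one {R ι : Type*} [CommRing R] [Nontrivial R]
    {N : ℕ} (hN : 0 < N) (s : Finset ι) (a : ι → R) (e : ι → ℕ) :
    (∑ k ∈ s, C (a k) * X ^ e k) %ₘ (X ^ N - 1) = ∑ k ∈ s, C (a k) * X ^ (e k % N) := by
  rw [← modByMonicHom_apply, map_sum]
  refine Finset.sum_congr rfl fun k _ => ?_
  rw [modByMonicHom_apply, ← smul_eq_C_mul, smul_modByMonic, X_pow_modByMonic_X_pow_sub_one hN,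
    smul_eq_C_mul]

lemma coeff_astar (b : ℕ) {N : ℕ} (hN : 0 < N) (r : ℕ) (F : ℝ[X]) (i : ℕ) :
    (astar b N r F).coeff i =
      ∑ k ∈ Finset.range N with (k + r) % N = i, alphaC b N r k * F.coeff k := by
  rw [astar, sum_C_mul_X_pow_modByMonic_X_pow_sub_one hN, finsetSum_coeff, Finset.sum_filter]
  simp only [coeff_C_mul, coeff_X_pow, mul_ite, mul_one, mul_zero, eq_comm]

lemma injOn_add_mod (N r : ℕ) : Set.InjOn (fun k => (k + r) % N) (Finset.range N) := by
  intro k hk k' hk' h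
  simp only [Finset.coe_range, Set.mem_Iio] at hk hk'
  have := Nat.ModEq.add_right_cancel' r h
  rwa [Nat.ModEq, Nat.mod_eq_of_lt hk, Nat.mod_eq_of_lt hk'] at this

/-- every coefficient of `α*_r F` is bounded by
`2^(-r(b-2)) · max_{k<N} |F_k|`. -/
theorem astar_r_norm_bound (b N : ℕ) (hN : 3 ≤ N)
    (F : Polynomial ℝ) (r : ℕ) :
    ∀ i : ℕ, |(astar b N r F).coeff i| ≤
      (2:ℝ) ^ (-((r : ℤ) * ((b : ℤ) - 2))) *
        (Finset.range N).sup' (Finset.nonempty_range_iff.mpr (by omega))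
          (fun k => |F.coeff k|) := by
  intro i
  have hN₀ : 0 < N := by omega
  set M := (Finset.range N).sup' (Finset.nonempty_range_iff.mpr (by omega)) (fun k => |F.coeff k|)
  have hFM : ∀ k ∈ Finset.range N, |F.coeff k| ≤ M :=
    fun k hk => Finset.le_sup' (fun k => |F.coeff k|) hk
  have hpow : ((2 : ℝ) ^ (-(b : ℤ))) ^ r ≤ (2 : ℝ) ^ (-((r : ℤ) * ((b : ℤ) - 2))) := by
    rw [← zpow_natCast, ← zpow_mul]
    exact zpow_le_zpow_right₀ one_le_two (by nlinarith)
  have hM : 0 ≤ M := (abs_nonneg _).trans (hFM 0 (Finset.mem_range.mpr hN₀))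
  rw [coeff_astar b hN₀]
  refine abs_sum_filter_le_of_injOn (injOn_add_mod N r) i (by positivity) fun k hk => ?_
  rw [abs_mul]
  exact mul_le_mul ((abs_alphaC_le b hN₀ r (Finset.mem_range.mp hk)).trans hpow) (hFM k hk)
    (abs_nonneg _) (by positivity)
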